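/- Suppose the ring E of degree-0 graded T-endomorphisms of T³ satisfies dim_F E = 2. Then every maximal element I of the (nonempty, partially ordered by inclusion) set of nonzero abelian graded ideals of T equals T^k = ⊕_{i ≥ k} T_i for some k ≥ 2; consequently T has at most one maximal nonzero abelian graded ideal. -/

import Mathlib

/-!
A nonzero graded ideal has finite codimension, so it contains `T_i` for all large `i`; and since
`T_{i+1} = [T_i, T_1]`, an ideal containing `T_i` contains every `T_j` with `j ≥ i`. So for a
maximal abelian graded ideal `I` it suffices that each `I ∩ T_j` (`j ≥ 1`) is `0` or `T_j`: then
`I = T^k` for the least `k` with `T_k ⊆ I`, and since any two such tails are comparable,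
maximality makes them equal.

For `j = 2` this is `dim T_2 = 1`. For `j = 1` we get `I ∩ T_1 = 0`: if `I ∩ T_2 = 0`, an
element of `I ∩ T_1` commutes with `T_1`, hence is central, and a homogeneous central element
spans a graded ideal, which cannot have finite codimension; if `T_2 = F z ⊆ I`, then
`T_3 = [z, T_1]` has dimension at most one, as `ad z` kills `I ∩ T_1`. For `j ≥ 3` we use `E`.
A nonzero `φ ∈ E` is injective, since its kernel and image are graded ideals that would both
contain some `T_i`, forcing `T_i = φ(T_i) = 0`. Maximality makes `I ∩ T³` stable under every
`θ ∈ E`, because `I + θ(I ∩ T³)` is again abelian. A line `I ∩ T_j` would then be spanned by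
an eigenvector of every `θ ∈ E`, making every `θ` scalar, which contradicts `dim E = 2`.
-/

open Submodule

/-- `T` is a graded Lie algebra generated in degree 1 with `dim_F T_i = 2` for `i ≠ 2`
and `dim_F T_2 = 1`. -/
structure IsThinGrading (F : Type*) [Field F] (T : Type*) [LieRing T] [LieAlgebra F T]
    (Tc : ℕ → Submodule F T) : Prop where
  zero_bot : Tc 0 = ⊥
  internal : DirectSum.IsInternal Tc
  lie_mem : ∀ i j : ℕ, ∀ x ∈ Tc i, ∀ y ∈ Tc j, ⁅x, y⁆ ∈ Tc (i + j)
  gen : LieSubalgebra.lieSpan F T (Tc 1 : Set T) = ⊤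
  finrank_eq_two : ∀ i : ℕ, 1 ≤ i → i ≠ 2 → Module.finrank F ↥(Tc i) = 2
  finrank_two : Module.finrank F ↥(Tc 2) = 1

/-- A Lie ideal `I` of `T` is graded if `I = ⊕_{i ≥ 1} (I ∩ T_i)`. -/
def IsGradedIdeal (F : Type*) [Field F] {T : Type*} [LieRing T] [LieAlgebra F T]
    (Tc : ℕ → Submodule F T) (I : LieIdeal F T) : Prop :=
  (I : Submodule F T) = ⨆ i : ℕ, ⨆ _ : 1 ≤ i, ((I : Submodule F T) ⊓ Tc i)

/-- `T³ = ⊕_{i ≥ 3} T_i`. -/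
def Tcube (F : Type*) [Field F] (T : Type*) [LieRing T] [LieAlgebra F T]
    (Tc : ℕ → Submodule F T) : Submodule F T :=
  ⨆ i : ℕ, ⨆ _ : 3 ≤ i, Tc i

/-- The ring (here: the `F`-subspace) of degree-0 graded `T`-endomorphisms of `T³`:
`F`-linear maps `φ : T³ → T³` with `φ(T_i) ⊆ T_i` for `i ≥ 3` and
`φ(⁅u, t⁆) = ⁅φ(u), t⁆` for `u ∈ T³`, `t ∈ T`. -/
def adjGrend (F : Type*) [Field F] (T : Type*) [LieRing T] [LieAlgebra F T]
    (Tc : ℕ → Submodule F T) :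
    Submodule F (↥(Tcube F T Tc) →ₗ[F] ↥(Tcube F T Tc)) where
  carrier := {φ |
    (∀ i : ℕ, 3 ≤ i → ∀ u : ↥(Tcube F T Tc), (u : T) ∈ Tc i → ((φ u : T) ∈ Tc i)) ∧
    ∀ (u w : ↥(Tcube F T Tc)) (t : T),
      (w : T) = ⁅(u : T), t⁆ → (φ w : T) = ⁅(φ u : T), t⁆}
  add_mem' := by
    rintro φ ψ ⟨h1, h2⟩ ⟨k1, k2⟩
    refine ⟨fun i hi u hu => ?_, fun u w t hw => ?_⟩
    · simpa using add_mem (h1 i hi u hu) (k1 i hi u hu)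
    · simp [h2 u w t hw, k2 u w t hw, add_lie]
  zero_mem' := ⟨fun i hi u hu => by simp, fun u w t hw => by simp⟩
  smul_mem' := by
    rintro c φ ⟨h1, h2⟩
    refine ⟨fun i hi u hu => ?_, fun u w t hw => ?_⟩
    · simpa using Submodule.smul_mem _ c (h1 i hi u hu)
    · simp [h2 u w t hw, smul_lie]


open DirectSum Filter

section GradedModule

variable {ι R M : Type*} [DecidableEq ι] [Semiring R] [AddCommMonoid M] [Module R M]
  {ℳ : ι → Submodule R M} [Decomposition ℳ]

theorem decompose_mem_of_mem_iSup {N : ι → Submodule R M} (hN : ∀ i, N i ≤ ℳ i) {x : M}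
    (hx : x ∈ ⨆ i, N i) (j : ι) : (decompose ℳ x j : M) ∈ N j := by
  induction hx using Submodule.iSup_induction' with
  | mem i y hy =>
    by_cases hij : i = j
    · subst hij
      rwa [decompose_of_mem_same ℳ (hN i hy)]
    · rw [decompose_of_mem_ne ℳ (hN i hy) hij]
      exact zero_mem _
  | zero => simp
  | add y z _ _ hy hz => simpa using add_mem hy hz

theorem isHomogeneous_span_singleton {x : M} {j : ι} (hx : x ∈ ℳ j) :
    (Submodule.span R {x}).IsHomogeneous ℳ := by
  intro i m hm
  obtain ⟨c, rfl⟩ := Submodule.mem_span_singleton.mp hm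
  rw [decompose_smul, DFinsupp.smul_apply, Submodule.coe_smul]
  by_cases hji : j = i
  · subst hji
    rw [decompose_of_mem_same ℳ hx]
    exact Submodule.smul_mem _ c (Submodule.mem_span_singleton_self x)
  · rw [decompose_of_mem_ne ℳ hx hji, smul_zero]
    exact zero_mem _

end GradedModule

section GradedTail

variable {R M : Type*} [Semiring R] [AddCommMonoid M] [Module R M]

def gradedTail (ℳ : ℕ → Submodule R M) (k : ℕ) : Submodule R M :=
  ⨆ i, ⨆ _ : k ≤ i, ℳ i

variable {ℳ : ℕ → Submodule R M} {k : ℕ}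

theorem le_gradedTail {i : ℕ} (h : k ≤ i) : ℳ i ≤ gradedTail ℳ k :=
  le_iSup₂_of_le i h le_rfl

theorem gradedTail_le {p : Submodule R M} (h : ∀ i, k ≤ i → ℳ i ≤ p) :
    gradedTail ℳ k ≤ p :=
  iSup₂_le h

theorem gradedTail_anti {k' : ℕ} (h : k ≤ k') : gradedTail ℳ k' ≤ gradedTail ℳ k :=
  gradedTail_le fun _ hi => le_gradedTail (h.trans hi)

variable [Decomposition ℳ]

theorem decompose_eq_zero_of_mem_gradedTail {x : M} (hx : x ∈ gradedTail ℳ k) {i : ℕ}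
    (hi : i < k) : (decompose ℳ x i : M) = 0 := by
  have := decompose_mem_of_mem_iSup (N := fun i => ⨆ _ : k ≤ i, ℳ i)
    (fun _ => iSup_le fun _ => le_rfl) hx i
  simpa [Nat.not_le.mpr hi] using this

theorem decompose_mem_gradedTail {x : M} (hx : x ∈ gradedTail ℳ k) (i : ℕ) :
    (decompose ℳ x i : M) ∈ gradedTail ℳ k := by
  rcases lt_or_ge i k with hi | hi
  · rw [decompose_eq_zero_of_mem_gradedTail hx hi]
    exact zero_mem _
  · exact le_gradedTail hi (decompose ℳ x i).2

theorem mem_gradedTail_of_decompose_eq_zero {x : M}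
    (h : ∀ i < k, (decompose ℳ x i : M) = 0) : x ∈ gradedTail ℳ k := by
  classical
  rw [← sum_support_decompose ℳ x]
  refine Submodule.sum_mem _ fun i _ => ?_
  rcases lt_or_ge i k with hi | hi
  · rw [h i hi]
    exact zero_mem _
  · exact le_gradedTail hi (decompose ℳ x i).2

end GradedTail

section FiniteDimensional

variable {K M : Type*} [Field K] [AddCommGroup M] [Module K M] {p q : Submodule K M}

theorem Submodule.IsHomogeneous.eventually_le_of_finite_quotient {ι : Type*} [DecidableEq ι]
    {ℳ : ι → Submodule K M} [Decomposition ℳ] (hp : p.IsHomogeneous ℳ)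
    [Module.Finite K (M ⧸ p)] : ∀ᶠ i in cofinite, ℳ i ≤ p := by
  have hx : ∀ i : {i | ¬ ℳ i ≤ p}, ∃ x ∈ ℳ i, x ∉ p := fun i =>
    SetLike.not_le_iff_exists.mp i.2
  choose x hxℳ hxp using hx
  have hind : LinearIndependent K fun i => p.mkQ (x i) := by
    rw [linearIndependent_iff']
    intro s g hg i hi
    have hsum : ∑ j ∈ s, g j • x j ∈ p := by
      rw [← Submodule.Quotient.mk_eq_zero, ← Submodule.mkQ_apply, map_sum]
      simpa only [map_smul] using hg
    have hcomp : (decompose ℳ (∑ j ∈ s, g j • x j) i : M) = g i • x i := by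
      rw [decompose_sum, DirectSum.sum_apply, Submodule.coe_sum, Finset.sum_eq_single i]
      · rw [decompose_smul, DFinsupp.smul_apply, Submodule.coe_smul,
          decompose_of_mem_same ℳ (hxℳ i)]
      · intro j _ hji
        rw [decompose_smul, DFinsupp.smul_apply, Submodule.coe_smul,
          decompose_of_mem_ne ℳ (hxℳ j) (fun h => hji (Subtype.ext h)), smul_zero]
      · exact fun h => absurd hi h
    by_contra hgi
    apply hxp i
    have := Submodule.smul_mem p (g i)⁻¹ (hcomp ▸ hp i hsum)
    rwa [smul_smul, inv_mul_cancel₀ hgi, one_smul] at this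
  exact (Set.finite_coe_iff.mp hind.finite).eventually_cofinite_notMem.mono
    fun _ hi => not_not.mp hi

theorem le_or_inf_eq_bot_of_finrank_eq_one (hq : Module.finrank K q = 1) :
    q ≤ p ∨ p ⊓ q = ⊥ := by
  have : FiniteDimensional K q := Module.finite_of_finrank_eq_succ hq
  refine or_iff_not_imp_right.mpr fun h => ?_
  have hpq := eq_of_le_of_finrank_le (inf_le_right : p ⊓ q ≤ q)
    (hq ▸ one_le_finrank_iff.mpr h)
  exact inf_eq_right.mp hpq

theorem finrank_inf_eq_one_of_finrank_eq_two (hq : Module.finrank K q = 2) (h0 : p ⊓ q ≠ ⊥)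
    (hle : ¬ q ≤ p) : Module.finrank K (p ⊓ q : Submodule K M) = 1 := by
  have : FiniteDimensional K q := Module.finite_of_finrank_eq_succ hq
  have hlt := finrank_lt_finrank_of_lt (inf_le_right.lt_of_ne fun h => hle (inf_eq_right.mp h))
  have hpos := one_le_finrank_iff.mpr h0
  omega

end FiniteDimensional

theorem LieSubalgebra.lie_eq_zero_of_lieSpan_eq_top {R L : Type*} [CommRing R] [LieRing L]
    [LieAlgebra R L] {s : Set L} (hs : lieSpan R L s = ⊤) {x : L}
    (hx : ∀ y ∈ s, ⁅x, y⁆ = 0) (t : L) : ⁅x, t⁆ = 0 := by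
  have ht : t ∈ lieSpan R L s := hs ▸ LieSubalgebra.mem_top t
  induction ht using lieSpan_induction with
  | mem y hy => exact hx y hy
  | zero => exact lie_zero x
  | add y z _ _ hy hz => rw [lie_add, hy, hz, add_zero]
  | smul c y _ hy => rw [lie_smul, hy, smul_zero]
  | lie y z _ _ hy hz => rw [leibniz_lie, hy, hz, zero_lie, lie_zero, add_zero]

section ThinLieAlgebra

variable {F T : Type*} [Field F] [LieRing T] [LieAlgebra F T] {Tc : ℕ → Submodule F T}
  {φ : Tcube F T Tc →ₗ[F] Tcube F T Tc} {I : LieIdeal F T}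

def lieIdealOfLieMem (S : Submodule F T) (h : ∀ x ∈ S, ∀ t : T, ⁅x, t⁆ ∈ S) :
    LieIdeal F T where
  toSubmodule := S
  lie_mem {t x} hx := by
    rw [← lie_skew]
    exact neg_mem (h x hx t)

def bracketPiece (Tc : ℕ → Submodule F T) : ℕ → Submodule F T
  | 0 => ⊥
  | 1 => Tc 1
  | n + 2 => Submodule.map₂ (LieAlgebra.ad F T : T →ₗ[F] Module.End F T) (Tc (n + 1)) (Tc 1)

def GradedJustInfinite (F : Type*) [Field F] {T : Type*} [LieRing T] [LieAlgebra F T]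
    (Tc : ℕ → Submodule F T) : Prop :=
  ∀ I : LieIdeal F T, IsGradedIdeal F Tc I → I ≠ ⊥ →
    Module.Finite F (T ⧸ (I : Submodule F T))

def IsNonzeroAbelianGradedIdeal (F : Type*) [Field F] {T : Type*} [LieRing T] [LieAlgebra F T]
    (Tc : ℕ → Submodule F T) (I : LieIdeal F T) : Prop :=
  I ≠ ⊥ ∧ (∀ x ∈ I, ∀ y ∈ I, ⁅x, y⁆ = (0 : T)) ∧ IsGradedIdeal F Tc I

def cubeLieIdeal (S : Submodule F (Tcube F T Tc))
    (hS : ∀ u ∈ S, ∀ t : T, ∃ w ∈ S, (w : T) = ⁅(u : T), t⁆) : LieIdeal F T :=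
  lieIdealOfLieMem (S.map (Tcube F T Tc).subtype) fun _ ⟨u, hu, hux⟩ t => by
    obtain ⟨w, hw, hwu⟩ := hS u hu t
    exact ⟨w, hw, hux ▸ hwu⟩

theorem IsThinGrading.ne_bot (hT : IsThinGrading F T Tc) {i : ℕ} (hi : 1 ≤ i) :
    Tc i ≠ ⊥ := by
  intro h
  have hrank : Module.finrank F (Tc i) ≠ 0 := by
    rcases eq_or_ne i 2 with rfl | h2
    · rw [hT.finrank_two]; exact one_ne_zero
    · rw [hT.finrank_eq_two i hi h2]; exact two_ne_zero
  rw [h, finrank_bot] at hrank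
  exact hrank rfl

theorem IsThinGrading.bracketPiece_le (hT : IsThinGrading F T Tc) :
    ∀ i, bracketPiece Tc i ≤ Tc i
  | 0 => bot_le
  | 1 => le_rfl
  | n + 2 => Submodule.map₂_le.mpr fun u hu v hv => hT.lie_mem (n + 1) 1 u hu v hv

theorem adjGrend.apply_lie (hφ : φ ∈ adjGrend F T Tc) {u w : Tcube F T Tc} {t : T}
    (h : (w : T) = ⁅(u : T), t⁆) : (φ w : T) = ⁅(φ u : T), t⁆ :=
  hφ.2 u w t h

theorem adjGrend.id_mem : LinearMap.id ∈ adjGrend F T Tc :=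
  ⟨fun _ _ _ hu => hu, fun _ _ _ h => h⟩

theorem exists_mem_adjGrend_ne_smul_id (hE : Module.finrank F (adjGrend F T Tc) = 2) :
    ∃ θ ∈ adjGrend F T Tc, ∀ c : F, θ ≠ c • LinearMap.id := by
  by_contra! h
  have hle : adjGrend F T Tc ≤ F ∙ LinearMap.id := fun θ hθ => by
    obtain ⟨c, rfl⟩ := h θ hθ
    exact Submodule.smul_mem _ c (Submodule.mem_span_singleton_self _)
  have := (Submodule.finrank_mono hle).trans (finrank_span_le_card {LinearMap.id})
  simp only [hE, Set.toFinset_singleton, Finset.card_singleton] at this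
  omega

variable [Decomposition Tc]

theorem IsThinGrading.isGradedIdeal_iff (hT : IsThinGrading F T Tc) :
    IsGradedIdeal F Tc I ↔ (I : Submodule F T).IsHomogeneous Tc := by
  constructor
  · intro hI i x hx
    rw [hI] at hx
    have := decompose_mem_of_mem_iSup (ℳ := Tc)
      (N := fun i => ⨆ _ : 1 ≤ i, (I : Submodule F T) ⊓ Tc i)
      (fun _ => iSup_le fun _ => inf_le_right) hx i
    exact (iSup_le fun _ => inf_le_left : _ ≤ (I : Submodule F T)) this
  · intro hI
    refine le_antisymm (fun x hx => ?_) (iSup₂_le fun _ _ => inf_le_left)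
    classical
    rw [← sum_support_decompose Tc x]
    refine Submodule.sum_mem _ fun i _ => ?_
    rcases Nat.eq_zero_or_pos i with rfl | hi
    · have h0 : (decompose Tc x 0 : T) ∈ (⊥ : Submodule F T) :=
        hT.zero_bot ▸ (decompose Tc x 0).2
      rw [(Submodule.mem_bot F).mp h0]
      exact zero_mem _
    · exact le_iSup₂_of_le (f := fun i (_ : 1 ≤ i) => (I : Submodule F T) ⊓ Tc i) i hi le_rfl
        ⟨hI i hx, (decompose Tc x i).2⟩

theorem IsThinGrading.lie_mem_gradedTail (hT : IsThinGrading F T Tc) {k : ℕ} {x : T}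
    (hx : x ∈ gradedTail Tc k) (t : T) : ⁅x, t⁆ ∈ gradedTail Tc k := by
  induction t using Decomposition.inductionOn Tc with
  | zero => simp
  | homogeneous t =>
    have hle : gradedTail Tc k ≤
        (gradedTail Tc k).comap ((LieAlgebra.ad F T : T →ₗ[F] Module.End F T).flip t) :=
      gradedTail_le fun i hi y hy =>
        le_gradedTail (hi.trans (Nat.le_add_right i _)) (hT.lie_mem i _ y hy t t.2)
    exact hle hx
  | add t t' ht ht' => rw [lie_add]; exact add_mem ht ht'

theorem IsThinGrading.succ_le_map₂ (hT : IsThinGrading F T Tc) {i : ℕ} (hi : 1 ≤ i) :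
    Tc (i + 1) ≤
      Submodule.map₂ (LieAlgebra.ad F T : T →ₗ[F] Module.End F T) (Tc i) (Tc 1) := by
  set P := ⨆ i, bracketPiece Tc i
  have hstep : ∀ x ∈ P, ∀ y ∈ Tc 1, ⁅x, y⁆ ∈ P := by
    intro x hx y hy
    induction hx using Submodule.iSup_induction' with
    | mem i x hx =>
      match i, hx with
      | 0, hx => simp [(Submodule.mem_bot F).mp hx]
      | n + 1, hx =>
        exact Submodule.mem_iSup_of_mem (n + 2)
          (Submodule.apply_mem_map₂ _ (hT.bracketPiece_le (n + 1) hx) hy)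
    | zero => simp
    | add x x' _ _ hx hx' => rw [add_lie]; exact add_mem hx hx'
  -- The Jacobi identity makes `{y | y ∈ P ∧ ⁅P, y⁆ ⊆ P}` a subalgebra; it contains `T_1`.
  have hP : ∀ y : T, y ∈ P ∧ ∀ x ∈ P, ⁅x, y⁆ ∈ P := by
    intro y
    have hy : y ∈ LieSubalgebra.lieSpan F T (Tc 1 : Set T) := hT.gen ▸ LieSubalgebra.mem_top y
    induction hy using LieSubalgebra.lieSpan_induction with
    | mem y hy => exact ⟨Submodule.mem_iSup_of_mem 1 hy, fun x hx => hstep x hx y hy⟩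
    | zero => exact ⟨zero_mem _, fun x _ => by simp⟩
    | add y z _ _ hy hz =>
      refine ⟨add_mem hy.1 hz.1, fun x hx => ?_⟩
      rw [lie_add]
      exact add_mem (hy.2 x hx) (hz.2 x hx)
    | smul c y _ hy =>
      refine ⟨Submodule.smul_mem _ c hy.1, fun x hx => ?_⟩
      rw [lie_smul]
      exact Submodule.smul_mem _ c (hy.2 x hx)
    | lie y z _ _ hy hz =>
      refine ⟨hz.2 y hy.1, fun x hx => ?_⟩
      rw [leibniz_lie, ← lie_skew y]
      exact add_mem (hz.2 _ (hy.2 x hx)) (neg_mem (hy.2 _ (hz.2 x hx)))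
  intro x hx
  have := decompose_mem_of_mem_iSup hT.bracketPiece_le (hP x).1 (i + 1)
  rw [decompose_of_mem_same Tc hx] at this
  obtain ⟨n, rfl⟩ : ∃ n, i = n + 1 := ⟨i - 1, by omega⟩
  exact this

theorem IsThinGrading.le_lieIdeal_of_le (hT : IsThinGrading F T Tc) {i j : ℕ} (hi : 1 ≤ i)
    (hij : i ≤ j) (h : Tc i ≤ I) : Tc j ≤ I := by
  induction j, hij using Nat.le_induction with
  | base => exact h
  | succ j hj ih =>
    refine (hT.succ_le_map₂ (hi.trans hj)).trans (Submodule.map₂_le.mpr fun u hu v _ => ?_)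
    exact lie_mem_left F T I u v (ih hu)

theorem GradedJustInfinite.eventually_le (hJI : GradedJustInfinite F Tc)
    (hT : IsThinGrading F T Tc) (hI : IsGradedIdeal F Tc I) (hI0 : I ≠ ⊥) :
    ∀ᶠ i in atTop, Tc i ≤ (I : Submodule F T) := by
  have := hJI I hI hI0
  rw [← Nat.cofinite_eq_atTop]
  exact (hT.isGradedIdeal_iff.mp hI).eventually_le_of_finite_quotient

theorem GradedJustInfinite.eq_zero_of_forall_lie_eq_zero (hJI : GradedJustInfinite F Tc)
    (hT : IsThinGrading F T Tc) {j : ℕ} {x : T} (hx : x ∈ Tc j)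
    (hcent : ∀ t : T, ⁅x, t⁆ = 0) :
    x = 0 := by
  by_contra hx0
  let K := lieIdealOfLieMem (Submodule.span F {x}) fun y hy t => by
    obtain ⟨c, rfl⟩ := Submodule.mem_span_singleton.mp hy
    rw [smul_lie, hcent, smul_zero]
    exact zero_mem _
  have hK : IsGradedIdeal F Tc K := hT.isGradedIdeal_iff.mpr (isHomogeneous_span_singleton hx)
  have hK0 : K ≠ ⊥ := fun h => hx0 <| by
    have hxK : x ∈ K := Submodule.mem_span_singleton_self x
    rwa [h, LieSubmodule.mem_bot] at hxK
  obtain ⟨i, hiK, hji⟩ := ((hJI.eventually_le hT hK hK0).and (eventually_gt_atTop j)).exists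
  refine hT.ne_bot (i := i) (by omega) (eq_bot_iff.mpr fun y hy => ?_)
  obtain ⟨c, rfl⟩ := Submodule.mem_span_singleton.mp (hiK hy)
  by_contra hy0
  exact hji.ne (degree_eq_of_mem_mem Tc (Submodule.smul_mem _ c hx) hy hy0)

theorem GradedJustInfinite.inf_eq_bot_of_inf_succ_eq_bot (hJI : GradedJustInfinite F Tc)
    (hT : IsThinGrading F T Tc) {I : LieIdeal F T} {j : ℕ}
    (h : (I : Submodule F T) ⊓ Tc (j + 1) = ⊥) : (I : Submodule F T) ⊓ Tc j = ⊥ := by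
  refine eq_bot_iff.mpr fun x hx => ?_
  refine (Submodule.mem_bot F).mpr (hJI.eq_zero_of_forall_lie_eq_zero hT hx.2 ?_)
  refine LieSubalgebra.lie_eq_zero_of_lieSpan_eq_top hT.gen fun y hy => ?_
  have hxy : ⁅x, y⁆ ∈ (I : Submodule F T) ⊓ Tc (j + 1) := by
    exact ⟨lie_mem_left F T I x y hx.1, hT.lie_mem j 1 x hx.2 y hy⟩
  rwa [h, Submodule.mem_bot] at hxy

theorem isGradedIdeal_cubeLieIdeal (hT : IsThinGrading F T Tc) {S : Submodule F (Tcube F T Tc)}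
    {hS : ∀ u ∈ S, ∀ t : T, ∃ w ∈ S, (w : T) = ⁅(u : T), t⁆}
    (hdec : ∀ u ∈ S, ∀ i, ∃ w ∈ S, (w : T) = decompose Tc (u : T) i) :
    IsGradedIdeal F Tc (cubeLieIdeal S hS) := by
  refine hT.isGradedIdeal_iff.mpr fun i x hx => ?_
  obtain ⟨u, hu, rfl⟩ := hx
  exact hdec u hu i

theorem adjGrend.apply_mem (hφ : φ ∈ adjGrend F T Tc) {i : ℕ} {u : Tcube F T Tc}
    (hu : (u : T) ∈ Tc i) :
    (φ u : T) ∈ Tc i := by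
  rcases lt_or_ge i 3 with hi | hi
  · have hu0 : u = 0 := Subtype.ext <| by
      rw [← decompose_of_mem_same Tc hu]
      exact decompose_eq_zero_of_mem_gradedTail u.2 hi
    rw [hu0, map_zero]
    exact zero_mem _
  · exact hφ.1 i hi u hu

theorem adjGrend.apply_decompose (hφ : φ ∈ adjGrend F T Tc) {i : ℕ} {u v : Tcube F T Tc}
    (hv : (v : T) = decompose Tc (u : T) i) : (φ v : T) = decompose Tc (φ u : T) i := by
  obtain ⟨u, hu⟩ := u
  induction hu using Submodule.iSup_induction' generalizing v with
  | mem l x hx =>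
    have hxl : x ∈ Tc l := (iSup_le fun _ => le_rfl : _ ≤ Tc l) hx
    have hφx := apply_mem hφ (u := ⟨x, Submodule.mem_iSup_of_mem l hx⟩) hxl
    by_cases hli : l = i
    · subst hli
      rw [decompose_of_mem_same Tc hφx]
      rw [decompose_of_mem_same Tc hxl] at hv
      exact congrArg _ (congrArg φ (Subtype.ext hv))
    · rw [decompose_of_mem_ne Tc hφx hli]
      rw [decompose_of_mem_ne Tc hxl hli] at hv
      rw [show v = 0 from Subtype.ext hv, map_zero, ZeroMemClass.coe_zero]
  | zero =>
    rw [show v = 0 from Subtype.ext (by simpa using hv)]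
    change (φ 0 : T) = decompose Tc (φ 0 : T) i
    simp
  | add x y hx hy ihx ihy =>
    let vx : Tcube F T Tc := ⟨_, decompose_mem_gradedTail hx i⟩
    let vy : Tcube F T Tc := ⟨_, decompose_mem_gradedTail hy i⟩
    have hv' : v = vx + vy := Subtype.ext <| by simpa [vx, vy] using hv
    have hxy : (⟨x + y, add_mem hx hy⟩ : Tcube F T Tc) = ⟨x, hx⟩ + ⟨y, hy⟩ := rfl
    rw [hv', map_add, hxy, map_add, Submodule.coe_add, Submodule.coe_add, decompose_add,
      DirectSum.add_apply, Submodule.coe_add, ihx (v := vx) rfl, ihy (v := vy) rfl]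

theorem adjGrend.ker_eq_bot (hT : IsThinGrading F T Tc) (hJI : GradedJustInfinite F Tc)
    (hφ : φ ∈ adjGrend F T Tc) (hφ0 : φ ≠ 0) : LinearMap.ker φ = ⊥ := by
  by_contra hker
  let K := cubeLieIdeal (LinearMap.ker φ) fun u hu t =>
    ⟨⟨_, hT.lie_mem_gradedTail u.2 t⟩, Subtype.ext <| by
      rw [apply_lie hφ rfl, LinearMap.mem_ker.mp hu]; simp, rfl⟩
  let R := cubeLieIdeal (LinearMap.range φ) fun _ ⟨u, hu⟩ t =>
    ⟨φ ⟨_, hT.lie_mem_gradedTail u.2 t⟩, ⟨_, rfl⟩, by rw [apply_lie hφ rfl, hu]⟩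
  have hK : IsGradedIdeal F Tc K := isGradedIdeal_cubeLieIdeal hT fun u hu i =>
    ⟨⟨_, decompose_mem_gradedTail u.2 i⟩, Subtype.ext <| by
      rw [apply_decompose hφ rfl, LinearMap.mem_ker.mp hu]; simp, rfl⟩
  have hR : IsGradedIdeal F Tc R := isGradedIdeal_cubeLieIdeal hT fun _ ⟨u, hu⟩ i =>
    ⟨φ ⟨_, decompose_mem_gradedTail u.2 i⟩, ⟨_, rfl⟩,
      by rw [apply_decompose hφ rfl, hu]⟩
  have hK0 : K ≠ ⊥ := by
    obtain ⟨u, hu, hu0⟩ := Submodule.exists_mem_ne_zero_of_ne_bot hker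
    rw [Ne, LieSubmodule.eq_bot_iff]
    exact fun h => hu0 (Subtype.ext (h _ ⟨u, hu, rfl⟩))
  have hR0 : R ≠ ⊥ := by
    obtain ⟨u, hu⟩ : ∃ u, φ u ≠ 0 := by
      by_contra! h
      exact hφ0 (LinearMap.ext h)
    rw [Ne, LieSubmodule.eq_bot_iff]
    exact fun h => hu (Subtype.ext (h _ ⟨φ u, ⟨u, rfl⟩, rfl⟩))
  obtain ⟨i, ⟨hiK, hiR⟩, hi⟩ := (((hJI.eventually_le hT hK hK0).and
    (hJI.eventually_le hT hR hR0)).and (eventually_ge_atTop 1)).exists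
  refine hT.ne_bot hi (eq_bot_iff.mpr fun y hy => ?_)
  obtain ⟨_, ⟨u, rfl⟩, rfl⟩ := hiR hy
  obtain ⟨w, hw, hwu⟩ := hiK (decompose Tc (u : T) i).2
  rw [Submodule.coe_subtype] at hy hwu ⊢
  rw [Submodule.mem_bot, ← decompose_of_mem_same Tc hy, ← apply_decompose hφ hwu,
    LinearMap.mem_ker.mp hw, ZeroMemClass.coe_zero]

theorem adjGrend.eq_smul_id_of_apply_eq_smul (hT : IsThinGrading F T Tc)
    (hJI : GradedJustInfinite F Tc) (hφ : φ ∈ adjGrend F T Tc) {u : Tcube F T Tc} (hu : u ≠ 0)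
    {c : F} (h : φ u = c • u) :
    φ = c • LinearMap.id := by
  by_contra hne
  have hker := ker_eq_bot hT hJI (sub_mem hφ (Submodule.smul_mem _ c id_mem))
    (sub_ne_zero.mpr hne)
  exact hu (LinearMap.ker_eq_bot'.mp hker u (by simp [h]))

theorem inf_Tc_one_eq_bot_of_Tc_two_le (hT : IsThinGrading F T Tc)
    (hab : ∀ x ∈ I, ∀ y ∈ I, ⁅x, y⁆ = (0 : T)) (h2 : Tc 2 ≤ (I : Submodule F T)) :
    (I : Submodule F T) ⊓ Tc 1 = ⊥ := by
  by_contra h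
  obtain ⟨x, hx, hx0⟩ := exists_mem_ne_zero_of_ne_bot h
  obtain ⟨z, hz, hz0⟩ := exists_mem_ne_zero_of_ne_bot (hT.ne_bot (i := 2) one_le_two)
  have : FiniteDimensional F (Tc 2) := Module.finite_of_finrank_eq_succ hT.finrank_two
  have hTc2 : F ∙ z = Tc 2 := eq_of_le_of_finrank_le ((span_singleton_le_iff_mem z _).mpr hz)
    (by rw [hT.finrank_two, finrank_span_singleton hz0])
  let f := (LieAlgebra.ad F T : T →ₗ[F] Module.End F T) z ∘ₗ (Tc 1).subtype
  have hTc3 : Tc 3 ≤ LinearMap.range f := by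
    have := hT.succ_le_map₂ (i := 2) one_le_two
    rw [← hTc2, map₂_span_singleton_eq_map] at this
    simpa only [f, LinearMap.range_comp, range_subtype] using this
  have : FiniteDimensional F (Tc 1) :=
    Module.finite_of_finrank_eq_succ (hT.finrank_eq_two 1 le_rfl (by norm_num))
  have hker : 1 ≤ Module.finrank F (LinearMap.ker f) := by
    refine one_le_finrank_iff.mpr ((Submodule.ne_bot_iff _).mpr ⟨⟨x, hx.2⟩, ?_, ?_⟩)
    · exact hab z (h2 hz) x hx.1
    · exact fun h => hx0 (congrArg Subtype.val h)
  have hrank := f.finrank_range_add_finrank_ker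
  have h3 := finrank_mono hTc3
  rw [hT.finrank_eq_two 1 le_rfl (by norm_num)] at hrank
  rw [hT.finrank_eq_two 3 (by norm_num) (by norm_num)] at h3
  omega

theorem GradedJustInfinite.inf_Tc_one_eq_bot (hJI : GradedJustInfinite F Tc)
    (hT : IsThinGrading F T Tc) (hab : ∀ x ∈ I, ∀ y ∈ I, ⁅x, y⁆ = (0 : T)) :
    (I : Submodule F T) ⊓ Tc 1 = ⊥ :=
  (le_or_inf_eq_bot_of_finrank_eq_one hT.finrank_two).elim
    (inf_Tc_one_eq_bot_of_Tc_two_le hT hab) (hJI.inf_eq_bot_of_inf_succ_eq_bot hT)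

theorem adjGrend.apply_mem_of_maximal (hT : IsThinGrading F T Tc)
    (hI : Maximal (IsNonzeroAbelianGradedIdeal F Tc) I) {θ : Tcube F T Tc →ₗ[F] Tcube F T Tc}
    (hθ : θ ∈ adjGrend F T Tc) {u : Tcube F T Tc} (hu : (u : T) ∈ I) : (θ u : T) ∈ I := by
  obtain ⟨hI0, hab, hgr⟩ := hI.prop
  have hθlie : ∀ v : Tcube F T Tc, ∀ x : T, ⁅(v : T), x⁆ = 0 → ⁅(θ v : T), x⁆ = 0 :=
    fun v x h => by rw [← apply_lie hθ (w := 0) h.symm, map_zero, ZeroMemClass.coe_zero]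
  let S := ((I : Submodule F T).comap (Tcube F T Tc).subtype).map θ
  have hSI : ∀ s ∈ S, ∀ b ∈ I, ⁅(s : T), b⁆ = 0 := by
    rintro _ ⟨v, hv, rfl⟩ b hb
    exact hθlie v b (hab _ hv b hb)
  let J := cubeLieIdeal S fun _ ⟨v, hv, hvs⟩ t =>
    ⟨θ ⟨_, hT.lie_mem_gradedTail v.2 t⟩, ⟨_, lie_mem_left F T I _ t hv, rfl⟩,
      by rw [apply_lie hθ rfl, hvs]⟩
  have hJgr : IsGradedIdeal F Tc J := isGradedIdeal_cubeLieIdeal hT fun _ ⟨v, hv, hvs⟩ i =>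
    ⟨θ ⟨_, decompose_mem_gradedTail v.2 i⟩, ⟨_, hT.isGradedIdeal_iff.mp hgr i hv, rfl⟩,
      by rw [apply_decompose hθ rfl, hvs]⟩
  have hIJ : IsNonzeroAbelianGradedIdeal F Tc (I ⊔ J) := by
    refine ⟨fun h => hI0 (eq_bot_iff.mpr (h ▸ le_sup_left)), ?_, ?_⟩
    · rintro _ hx _ hy
      obtain ⟨a, ha, _, ⟨s, hs, rfl⟩, rfl⟩ := (LieSubmodule.mem_sup _ _ _).mp hx
      obtain ⟨b, hb, _, ⟨s', hs', rfl⟩, rfl⟩ := (LieSubmodule.mem_sup _ _ _).mp hy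
      have hss' : ⁅(s : T), (s' : T)⁆ = 0 := by
        obtain ⟨v, hv, rfl⟩ := hs
        refine hθlie v _ ?_
        rw [← lie_skew, hSI s' hs' (v : T) hv, neg_zero]
      simp only [Submodule.coe_subtype, lie_add, add_lie, hab a ha b hb, hSI s hs b hb, hss']
      rw [← lie_skew, hSI s' hs' a ha]
      simp
    · refine hT.isGradedIdeal_iff.mpr fun i x hx => ?_
      obtain ⟨a, ha, b, hb, rfl⟩ := (LieSubmodule.mem_sup _ _ _).mp hx
      rw [decompose_add, DirectSum.add_apply, Submodule.coe_add]
      exact add_mem_sup (hT.isGradedIdeal_iff.mp hgr i ha) (hT.isGradedIdeal_iff.mp hJgr i hb)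
  rw [hI.eq_of_le hIJ le_sup_left]
  exact (LieSubmodule.mem_sup _ _ _).mpr
    ⟨0, zero_mem _, _, ⟨θ u, ⟨u, hu, rfl⟩, rfl⟩, zero_add _⟩

theorem le_or_inf_eq_bot_of_maximal (hT : IsThinGrading F T Tc) (hJI : GradedJustInfinite F Tc)
    (hE : Module.finrank F (adjGrend F T Tc) = 2)
    (hI : Maximal (IsNonzeroAbelianGradedIdeal F Tc) I) {j : ℕ} (hj : 2 ≤ j) :
    Tc j ≤ I ∨ (I : Submodule F T) ⊓ Tc j = ⊥ := by
  obtain rfl | hj := hj.eq_or_lt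
  · exact le_or_inf_eq_bot_of_finrank_eq_one hT.finrank_two
  by_contra! h
  obtain ⟨θ, hθ, hθc⟩ := exists_mem_adjGrend_ne_smul_id hE
  obtain ⟨x, hx, hx0⟩ := exists_mem_ne_zero_of_ne_bot h.2
  let u : Tcube F T Tc := ⟨x, le_gradedTail hj hx.2⟩
  have hθu : (θ u : T) ∈ (I : Submodule F T) ⊓ Tc j :=
    ⟨adjGrend.apply_mem_of_maximal hT hI hθ hx.1, adjGrend.apply_mem hθ hx.2⟩
  have hrank := finrank_inf_eq_one_of_finrank_eq_two (hT.finrank_eq_two j (by omega) (by omega))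
    h.2 h.1
  have hx0' : (⟨x, hx⟩ : ((I : Submodule F T) ⊓ Tc j : Submodule F T)) ≠ 0 :=
    fun h => hx0 (congrArg Subtype.val h)
  obtain ⟨c, hc⟩ := (finrank_eq_one_iff_of_nonzero' _ hx0').mp hrank ⟨_, hθu⟩
  exact hθc c (adjGrend.eq_smul_id_of_apply_eq_smul hT hJI hθ (u := u)
    (fun h => hx0 (congrArg Subtype.val h)) (Subtype.ext (congrArg Subtype.val hc).symm))

theorem exists_eq_gradedTail_of_maximal (hT : IsThinGrading F T Tc)
    (hJI : GradedJustInfinite F Tc) (hE : Module.finrank F (adjGrend F T Tc) = 2)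
    (hI : Maximal (IsNonzeroAbelianGradedIdeal F Tc) I) :
    ∃ k, 2 ≤ k ∧ (I : Submodule F T) = gradedTail Tc k := by
  classical
  obtain ⟨hI0, hab, hgr⟩ := hI.prop
  have hex : ∃ n, 2 ≤ n ∧ Tc n ≤ I :=
    ((eventually_ge_atTop 2).and (hJI.eventually_le hT hgr hI0)).exists
  obtain ⟨hk2, hk⟩ := Nat.find_spec hex
  have hbelow : ∀ i < Nat.find hex, (I : Submodule F T) ⊓ Tc i = ⊥
    | 0, _ => by rw [hT.zero_bot, inf_bot_eq]
    | 1, _ => hJI.inf_Tc_one_eq_bot hT hab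
    | i + 2, hi => (le_or_inf_eq_bot_of_maximal hT hJI hE hI le_add_self).resolve_left
        fun h => Nat.find_min hex hi ⟨le_add_self, h⟩
  refine ⟨Nat.find hex, hk2, le_antisymm (fun x hx => ?_)
    (gradedTail_le fun i hi => hT.le_lieIdeal_of_le (by omega) hi hk)⟩
  refine mem_gradedTail_of_decompose_eq_zero fun i hi => ?_
  have hxi : (decompose Tc x i : T) ∈ (I : Submodule F T) ⊓ Tc i :=
    ⟨hT.isGradedIdeal_iff.mp hgr i hx, (decompose Tc x i).2⟩
  rwa [hbelow i hi, Submodule.mem_bot] at hxi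

theorem eq_of_maximal (hT : IsThinGrading F T Tc) (hJI : GradedJustInfinite F Tc)
    (hE : Module.finrank F (adjGrend F T Tc) = 2) {J : LieIdeal F T}
    (hI : Maximal (IsNonzeroAbelianGradedIdeal F Tc) I)
    (hJ : Maximal (IsNonzeroAbelianGradedIdeal F Tc) J) : I = J := by
  obtain ⟨k, -, hk⟩ := exists_eq_gradedTail_of_maximal hT hJI hE hI
  obtain ⟨l, -, hl⟩ := exists_eq_gradedTail_of_maximal hT hJI hE hJ
  rcases le_total k l with h | h
  · refine (hJ.eq_of_le hI.prop fun x hx => ?_).symm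
    change x ∈ (I : Submodule F T)
    exact hk ▸ gradedTail_anti h (hl ▸ hx)
  · refine hI.eq_of_le hJ.prop fun x hx => ?_
    change x ∈ (J : Submodule F T)
    exact hl ▸ gradedTail_anti h (hk ▸ hx)

end ThinLieAlgebra

/-- if the ring `E` of degree-0 graded `T`-endomorphisms of `T³` has
`dim_F E = 2`, then every maximal element of the set of nonzero abelian graded ideals of
`T` equals `T^k = ⊕_{i ≥ k} T_i` for some `k ≥ 2`; consequently `T` has at most one
maximal nonzero abelian graded ideal. -/
theorem stmt_19 (F : Type*) [Field F] (T : Type*) [LieRing T] [LieAlgebra F T]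
    (Tc : ℕ → Submodule F T) (hT : IsThinGrading F T Tc)
    (hJI : ∀ I : LieIdeal F T, IsGradedIdeal F Tc I → I ≠ ⊥ →
      Module.Finite F (T ⧸ (I : Submodule F T)))
    (hE : Module.finrank F ↥(adjGrend F T Tc) = 2) :
    (∀ I : LieIdeal F T, I ≠ ⊥ → (∀ x ∈ I, ∀ y ∈ I, ⁅x, y⁆ = (0 : T)) →
      IsGradedIdeal F Tc I →
      (∀ J : LieIdeal F T, J ≠ ⊥ → (∀ x ∈ J, ∀ y ∈ J, ⁅x, y⁆ = (0 : T)) →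
        IsGradedIdeal F Tc J → I ≤ J → I = J) →
      ∃ k : ℕ, 2 ≤ k ∧ (I : Submodule F T) = ⨆ i : ℕ, ⨆ _ : k ≤ i, Tc i) ∧
    (∀ I J : LieIdeal F T,
      (I ≠ ⊥ ∧ (∀ x ∈ I, ∀ y ∈ I, ⁅x, y⁆ = (0 : T)) ∧ IsGradedIdeal F Tc I ∧
        ∀ I' : LieIdeal F T, I' ≠ ⊥ → (∀ x ∈ I', ∀ y ∈ I', ⁅x, y⁆ = (0 : T)) →
          IsGradedIdeal F Tc I' → I ≤ I' → I = I') →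
      (J ≠ ⊥ ∧ (∀ x ∈ J, ∀ y ∈ J, ⁅x, y⁆ = (0 : T)) ∧ IsGradedIdeal F Tc J ∧
        ∀ J' : LieIdeal F T, J' ≠ ⊥ → (∀ x ∈ J', ∀ y ∈ J', ⁅x, y⁆ = (0 : T)) →
          IsGradedIdeal F Tc J' → J ≤ J' → J = J') →
      I = J) := by
  let _ : Decomposition Tc := hT.internal.chooseDecomposition
  have hmax : ∀ I : LieIdeal F T, (I ≠ ⊥ ∧ (∀ x ∈ I, ∀ y ∈ I, ⁅x, y⁆ = (0 : T)) ∧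
      IsGradedIdeal F Tc I ∧ ∀ J : LieIdeal F T, J ≠ ⊥ →
        (∀ x ∈ J, ∀ y ∈ J, ⁅x, y⁆ = (0 : T)) → IsGradedIdeal F Tc J → I ≤ J → I = J) →
      Maximal (IsNonzeroAbelianGradedIdeal F Tc) I :=
    fun I ⟨hI0, hab, hgr, h⟩ =>
      ⟨⟨hI0, hab, hgr⟩, fun J ⟨hJ0, hJab, hJgr⟩ hIJ => (h J hJ0 hJab hJgr hIJ).ge⟩
  exact ⟨fun I hI0 hab hgr h =>
      exists_eq_gradedTail_of_maximal hT hJI hE (hmax I ⟨hI0, hab, hgr, h⟩),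
    fun I J hI hJ => eq_of_maximal hT hJI hE (hmax I hI) (hmax J hJ)⟩
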